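/- For all n ≥ 6 and every complex irreducible character χ of S_n, the identity χ((3,2))/χ(1) + (6/(n−4))·χ((4))/χ(1) − (n(n−1)/((n−3)(n−4)))·(χ((3))/χ(1))·(χ((2))/χ(1)) + (6/((n−3)(n−4)))·χ((2))/χ(1) = 0 holds, where (3,2), (4), (3), (2) denote the conjugacy classes of the corresponding cycle types. -/

import Mathlib

/-!
For simple `V`, Schur's lemma makes the class sum of the transpositions act on `V` by a scalar,
which gives `χ(1) · ∑_τ χ(τ c) = (∑_τ χ(τ)) · χ(c)`, the sums running over all transpositions
`τ`. A transposition meeting the support of the 3-cycle `c` in 0, 1 or 2 points turns `c` into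
an element of type `(3,2)`, `(4)` or `(2)`, and there are `C(n-3,2)`, `3(n-3)` and `3` such
transpositions out of `C(n,2)`. Dividing the resulting identity by `χ(1)² (n-3)(n-4)/2` gives the
claim.
-/

open CategoryTheory Equiv Equiv.Perm Finset

theorem Finset.card_filter_powersetCard_card_inter {α : Type*} [DecidableEq α] (u s : Finset α)
    {m j : ℕ} (hj : j ≤ m) :
    #{t ∈ powersetCard m u | #(t ∩ s) = j} =
      (#(u ∩ s)).choose j * (#(u \ s)).choose (m - j) := by
  rw [← card_powersetCard, ← card_powersetCard, ← card_product]
  refine card_nbij' (fun t => (t ∩ s, t \ s)) (fun p => p.1 ∪ p.2) ?_ ?_ ?_ ?_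
  · intro t ht
    rw [mem_coe, mem_filter, mem_powersetCard] at ht
    obtain ⟨⟨htu, rfl⟩, rfl⟩ := ht
    simp only [coe_product, Set.mem_prod, mem_coe, mem_powersetCard]
    have := card_sdiff_add_card_inter t s
    exact ⟨⟨inter_subset_inter htu subset_rfl, trivial⟩, sdiff_subset_sdiff htu subset_rfl,
      by omega⟩
  · rintro ⟨A, B⟩ hAB
    simp only [coe_product, Set.mem_prod, mem_coe, mem_powersetCard, subset_inter_iff,
      subset_sdiff] at hAB
    obtain ⟨⟨⟨hAu, hAs⟩, rfl⟩, ⟨hBu, hBs⟩, hB⟩ := hAB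
    rw [mem_coe, mem_filter, mem_powersetCard,
      card_union_of_disjoint (disjoint_of_subset_left hAs hBs.symm), union_inter_distrib_right,
      inter_eq_left.mpr hAs, disjoint_iff_inter_eq_empty.mp hBs, union_empty]
    exact ⟨⟨union_subset hAu hBu, by omega⟩, rfl⟩
  · intro t _
    ext x
    simp only [mem_union, mem_inter, mem_sdiff]
    tauto
  · rintro ⟨A, B⟩ hAB
    simp only [coe_product, Set.mem_prod, mem_coe, mem_powersetCard, subset_inter_iff,
      subset_sdiff] at hAB
    obtain ⟨⟨⟨-, hAs⟩, -⟩, ⟨-, hBs⟩, -⟩ := hAB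
    dsimp only
    rw [union_inter_distrib_right, inter_eq_left.mpr hAs, disjoint_iff_inter_eq_empty.mp hBs,
      union_empty, union_sdiff_distrib, sdiff_eq_empty_iff_subset.mpr hAs,
      Disjoint.sdiff_eq_left hBs, empty_union]

theorem FDRep.character_one_mul_sum_character_mul {k G : Type*} [Field k] [IsAlgClosed k]
    [Group G] (V : FDRep k G) [Simple V] (S : Finset G) (hS : ∀ g, ∀ x ∈ S, g * x * g⁻¹ ∈ S)
    (y : G) :
    V.character 1 * ∑ x ∈ S, V.character (x * y) =
      (∑ x ∈ S, V.character x) * V.character y := by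
  set φ := ∑ x ∈ S, V.ρ x
  have hφ : ∀ g, φ * V.ρ g = V.ρ g * φ := by
    intro g
    rw [sum_mul, mul_sum]
    refine sum_nbij' (fun x => g⁻¹ * x * g) (fun x => g * x * g⁻¹) ?_ (fun x hx => hS g x hx)
      (fun x _ => by group) (fun x _ => by group) fun x _ => ?_
    · intro x hx
      simpa [mul_assoc] using hS g⁻¹ x hx
    · simp only [← map_mul]
      group
  let Φ : V ⟶ V := ⟨FGModuleCat.ofHom φ, fun g => by ext1; exact hφ g⟩
  obtain ⟨a, ha⟩ := endomorphism_simple_eq_smul_id k Φ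
  replace ha : φ = a • 1 := congrArg (fun F : V ⟶ V => F.hom.hom.hom) ha.symm
  have sum_character_mul : ∀ y, ∑ x ∈ S, V.character (x * y) = a * V.character y := by
    intro y
    simp only [FDRep.character, map_mul, ← map_sum, ← sum_mul]
    change LinearMap.trace k V (φ * V.ρ y) = _
    rw [ha, smul_mul_assoc, one_mul, map_smul, smul_eq_mul]
  have sum_character : ∑ x ∈ S, V.character x = a * V.character 1 := by
    simpa only [mul_one] using sum_character_mul 1
  rw [sum_character_mul, sum_character]
  ring

namespace Equiv.Perm

variable {α : Type*} [DecidableEq α] [Fintype α] {c σ τ : Perm α} {a b : α}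

theorem IsThreeCycle.apply_apply_apply (hc : c.IsThreeCycle) (a : α) : c (c (c a)) = a := by
  have h : (c ^ 3) a = a := by rw [← hc.orderOf, pow_orderOf_eq_one, one_apply]
  simpa [pow_succ] using h

theorem IsThreeCycle.cycleType_swap_apply_mul (hc : c.IsThreeCycle) (ha : a ∈ c.support) :
    (swap a (c a) * c).cycleType = {2} := by
  rw [← isSwap_iff_cycleType]
  nth_rw 2 [hc.eq_swap_mul_swap_iff_mem_support.mpr ha]
  rw [← mul_assoc, swap_mul_self, one_mul, swap_isSwap_iff]
  simpa using (List.nodup_cons.mp (hc.nodup_iff_mem_support.mpr ha)).2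

theorem IsThreeCycle.cycleType_swap_mul_of_mem_of_notMem (hc : c.IsThreeCycle)
    (ha : a ∈ c.support) (hb : b ∉ c.support) : (swap b a * c).cycleType = {4} := by
  have hnodup : [b, a, c a, c (c a)].Nodup := by
    refine List.nodup_cons.mpr ⟨?_, hc.nodup_iff_mem_support.mpr ha⟩
    have := apply_mem_support.mpr ha
    have := apply_mem_support.mpr this
    grind
  have hform : swap b a * c = [b, a, c a, c (c a)].formPerm := by
    simp only [List.formPerm_cons_cons, List.formPerm_singleton, mul_one]
    rw [← hc.eq_swap_mul_swap_iff_mem_support.mpr ha]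
  rw [hform, (List.isCycle_formPerm hnodup (by simp)).cycleType,
    List.support_formPerm_of_nodup _ hnodup (by simp), List.toFinset_card_of_nodup hnodup]
  rfl

theorem IsThreeCycle.cycleType_swap_mul_of_mem_of_mem (hc : c.IsThreeCycle) (hab : a ≠ b)
    (ha : a ∈ c.support) (hb : b ∈ c.support) : (swap a b * c).cycleType = {2} := by
  rw [hc.support_eq_iff_mem_support.mpr ha] at hb
  simp only [mem_insert, mem_singleton] at hb
  rcases hb with rfl | rfl | rfl
  · exact absurd rfl hab
  · exact hc.cycleType_swap_apply_mul ha
  · have := hc.cycleType_swap_apply_mul (a := c (c a)) (by simpa using ha)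
    rwa [hc.apply_apply_apply, swap_comm] at this

theorem IsThreeCycle.cycleType_mul_of_card_support_inter_eq_zero (hc : c.IsThreeCycle)
    (hσ : σ.IsSwap) (h : #(σ.support ∩ c.support) = 0) : (σ * c).cycleType = {3, 2} := by
  rw [card_eq_zero, ← disjoint_iff_inter_eq_empty, ← disjoint_iff_disjoint_support] at h
  rw [h.cycleType_mul, isSwap_iff_cycleType.mp hσ, hc]
  decide

theorem IsThreeCycle.cycleType_mul_of_card_support_inter_eq_one (hc : c.IsThreeCycle)
    (hσ : σ.IsSwap) (h : #(σ.support ∩ c.support) = 1) : (σ * c).cycleType = {4} := by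
  obtain ⟨a, b, hab, rfl⟩ := hσ
  rw [support_swap hab] at h
  by_cases ha : a ∈ c.support <;> by_cases hb : b ∈ c.support
  · simp [insert_inter_of_mem, ha, hb, hab] at h
  · rw [swap_comm]
    exact hc.cycleType_swap_mul_of_mem_of_notMem ha hb
  · exact hc.cycleType_swap_mul_of_mem_of_notMem hb ha
  · simp [insert_inter_of_notMem, ha, hb] at h

theorem IsThreeCycle.cycleType_mul_of_card_support_inter_eq_two (hc : c.IsThreeCycle)
    (hσ : σ.IsSwap) (h : #(σ.support ∩ c.support) = 2) : (σ * c).cycleType = {2} := by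
  obtain ⟨a, b, hab, rfl⟩ := hσ
  have hsub : {a, b} ⊆ c.support := by
    rw [← support_swap hab, ← inter_eq_left]
    exact eq_of_subset_of_card_le inter_subset_left (by rw [h, support_swap hab, card_pair hab])
  exact hc.cycleType_swap_mul_of_mem_of_mem hab (hsub (by simp)) (hsub (by simp))

theorem IsSwap.eq_of_support_eq (hσ : σ.IsSwap) (hτ : τ.IsSwap) (h : σ.support = τ.support) :
    σ = τ := by
  obtain ⟨a, b, hab, rfl⟩ := hσ
  obtain ⟨a', b', hab', rfl⟩ := hτ
  rw [support_swap hab, support_swap hab', ← coe_inj, coe_pair, coe_pair,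
    Set.pair_eq_pair_iff] at h
  rcases h with ⟨rfl, rfl⟩ | ⟨rfl, rfl⟩
  · rfl
  · exact swap_comm _ _

theorem card_filter_card_support_eq_two_and (p : Finset α → Prop) [DecidablePred p] :
    #{σ : Perm α | #σ.support = 2 ∧ p σ.support} = #{t ∈ powersetCard 2 univ | p t} := by
  refine card_bij (fun σ _ => σ.support) (fun σ hσ => ?_) (fun σ hσ τ hτ h => ?_) fun t ht => ?_
  · simp_all
  · simp only [mem_filter, mem_univ, true_and, card_support_eq_two] at hσ hτ
    exact hσ.1.eq_of_support_eq hτ.1 h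
  · simp only [mem_filter, mem_powersetCard, subset_univ, true_and] at ht
    obtain ⟨a, b, hab, rfl⟩ := card_eq_two.mp ht.1
    exact ⟨swap a b, by simp [support_swap hab, hab, ht.2], support_swap hab⟩

theorem card_filter_card_support_eq_two :
    #{σ : Perm α | #σ.support = 2} = (Fintype.card α).choose 2 := by
  convert card_filter_card_support_eq_two_and (α := α) (fun _ => True) using 1
  · exact congrArg card (filter_congr fun _ _ => (and_true _).symm.to_iff)
  · simp

theorem card_filter_card_support_eq_two_and_card_support_inter (s : Finset α) {j : ℕ}
    (hj : j ≤ 2) :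
    #{σ : Perm α | #σ.support = 2 ∧ #(σ.support ∩ s) = j} =
      (#s).choose j * (#sᶜ).choose (2 - j) := by
  rw [card_filter_card_support_eq_two_and fun t => #(t ∩ s) = j,
    card_filter_powersetCard_card_inter _ _ hj, univ_inter, compl_eq_univ_sdiff]

end Equiv.Perm

namespace FDRep

variable {k α : Type*} [Field k] [DecidableEq α] [Fintype α] (V : FDRep k (Perm α))

theorem character_eq_of_cycleType_eq {σ τ : Perm α} (h : σ.cycleType = τ.cycleType) :
    V.character σ = V.character τ := by
  obtain ⟨g, rfl⟩ := isConj_iff.mp (isConj_iff_cycleType_eq.mpr h)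
  exact (V.char_conj σ g).symm

theorem sum_character_card_support_eq_two {t : Perm α} (ht : t.cycleType = {2}) :
    ∑ σ ∈ {σ : Perm α | #σ.support = 2}, V.character σ =
      (Fintype.card α).choose 2 * V.character t := by
  rw [sum_eq_card_nsmul fun σ hσ => V.character_eq_of_cycleType_eq ?_,
    card_filter_card_support_eq_two, nsmul_eq_mul]
  rw [ht, ← isSwap_iff_cycleType, ← card_support_eq_two]
  simpa using hσ

theorem sum_character_mul_of_isThreeCycle {c u f t : Perm α} (hc : c.IsThreeCycle)
    (hu : u.cycleType = {3, 2}) (hf : f.cycleType = {4}) (ht : t.cycleType = {2}) :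
    ∑ σ ∈ {σ : Perm α | #σ.support = 2}, V.character (σ * c) =
      (Fintype.card α - 3).choose 2 * V.character u
        + (3 * (Fintype.card α - 3) : ℕ) * V.character f + 3 * V.character t := by
  have hmaps : ∀ σ ∈ ({σ : Perm α | #σ.support = 2} : Finset _),
      #(σ.support ∩ c.support) ∈ range 3 := by
    intro σ hσ
    rw [mem_filter] at hσ
    have := card_le_card (inter_subset_left (s₁ := σ.support) (s₂ := c.support))
    rw [mem_range]
    omega
  have hfiber : ∀ j ≤ 2, ∀ τ : Perm α, (∀ σ : Perm α, σ.IsSwap →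
      #(σ.support ∩ c.support) = j → (σ * c).cycleType = τ.cycleType) →
      ∑ σ ∈ {σ : Perm α | #σ.support = 2 ∧ #(σ.support ∩ c.support) = j}, V.character (σ * c) =
        (3 : ℕ).choose j * (Fintype.card α - 3).choose (2 - j) * V.character τ := by
    intro j hj τ hτ
    rw [sum_eq_card_nsmul fun σ hσ => V.character_eq_of_cycleType_eq ?_, nsmul_eq_mul,
      card_filter_card_support_eq_two_and_card_support_inter _ hj, card_compl,
      hc.card_support, Nat.cast_mul]
    rw [mem_filter, card_support_eq_two] at hσ
    exact hτ σ hσ.2.1 hσ.2.2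
  rw [← sum_fiberwise_of_maps_to hmaps]
  simp only [sum_range_succ, sum_range_zero, zero_add, filter_filter]
  rw [hfiber 0 (by norm_num) u fun σ hσ h =>
      hu ▸ hc.cycleType_mul_of_card_support_inter_eq_zero hσ h,
    hfiber 1 (by norm_num) f fun σ hσ h =>
      hf ▸ hc.cycleType_mul_of_card_support_inter_eq_one hσ h,
    hfiber 2 (by norm_num) t fun σ hσ h =>
      ht ▸ hc.cycleType_mul_of_card_support_inter_eq_two hσ h]
  simp

end FDRep

/-- For all `n ≥ 6` and every complex irreducible character `χ` of `S_n`, with `u` of cycle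
type `(3,2)`, `f` a 4-cycle, `c` a 3-cycle and `t` a transposition:
`χ((3,2))/χ(1) + (6/(n−4))·χ((4))/χ(1) − (n(n−1)/((n−3)(n−4)))·(χ((3))/χ(1))·(χ((2))/χ(1))
 + (6/((n−3)(n−4)))·χ((2))/χ(1) = 0`. -/
theorem stmt19 (n : ℕ) (hn : 6 ≤ n) (V : FDRep ℂ (Equiv.Perm (Fin n)))
    [CategoryTheory.Simple V]
    (u f c t : Equiv.Perm (Fin n)) (hu : u.cycleType = {3, 2}) (hf : f.cycleType = {4})
    (hc : c.cycleType = {3}) (ht : t.cycleType = {2}) :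
    V.character u / V.character 1
      + (6 / ((n : ℂ) - 4)) * (V.character f / V.character 1)
      - ((n : ℂ) * ((n : ℂ) - 1) / (((n : ℂ) - 3) * ((n : ℂ) - 4))) *
          ((V.character c / V.character 1) * (V.character t / V.character 1))
      + (6 / (((n : ℂ) - 3) * ((n : ℂ) - 4))) * (V.character t / V.character 1) = 0 := by
  by_cases hd : V.character 1 = 0
  · simp [hd]
  have key := V.character_one_mul_sum_character_mul {σ : Perm (Fin n) | #σ.support = 2}
    (fun g σ hσ => by simpa using hσ) c
  rw [V.sum_character_mul_of_isThreeCycle hc hu hf ht, V.sum_character_card_support_eq_two ht,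
    Fintype.card_fin] at key
  have hcast : ((n - 3 : ℕ) : ℂ) = n - 3 := by push_cast [Nat.cast_sub (by omega : 3 ≤ n)]; ring
  push_cast [Nat.cast_choose_two, hcast] at key
  have hn3 : (n : ℂ) - 3 ≠ 0 := sub_ne_zero.mpr (by exact_mod_cast (by omega : n ≠ 3))
  have hn4 : (n : ℂ) - 4 ≠ 0 := sub_ne_zero.mpr (by exact_mod_cast (by omega : n ≠ 4))
  field_simp
  linear_combination 2 * key
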